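/- Define the sequence (μ_i)_{i≥0} in ℝ³ by μ_0 = (3/4, 1/4, 0) and μ_{i+1} = G_{p_i}(μ_i) with p_i = 2/(2^i + 2). Then the sequence (μ_i) converges to the distribution (1/4, 1/4, 1/2) as i → ∞. -/

import Mathlib

open Filter

/-- `G p (a,b,c) = (p·a + c/2, (1−p)·a, b + c/2)`: one step of the running-example MDP
when action `a` is chosen in state `A` with probability `p` (and `b` with probability `1−p`). -/
noncomputable def G (p : ℝ) : ℝ × ℝ × ℝ → ℝ × ℝ × ℝ :=
  fun q => (p * q.1 + q.2.2 / 2, (1 - p) * q.1, q.2.1 + q.2.2 / 2)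

/-- The stream induced by the Markov strategy `p_i = 2/(2^i + 2)` from `μ_0 = (3/4, 1/4, 0)`. -/
noncomputable def mu : ℕ → ℝ × ℝ × ℝ
  | 0 => (3 / 4, 1 / 4, 0)
  | i + 1 => G (2 / (2 ^ i + 2)) (mu i)

lemma mu_eq (i : ℕ) :
    mu i = (1 / 4 + (1 / 2 : ℝ) ^ (i + 1), 1 / 4, 1 / 2 - (1 / 2 : ℝ) ^ (i + 1)) := by
  induction i with
  | zero => norm_num [mu]
  | succ n ih =>
    have h2 : (0 : ℝ) < 2 ^ n := by positivity
    have hne : (2 : ℝ) ^ n + 2 ≠ 0 := by positivity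
    rw [mu, ih, G]
    simp only [Prod.mk.injEq]
    refine ⟨?_, ?_, ?_⟩ <;>
    · simp only [one_div, inv_pow]
      field_simp
      ring

/-- The stream `(μ_i)` converges to the distribution `(1/4, 1/4, 1/2)`. -/
theorem mu_tendsto : Tendsto mu atTop (nhds ((1 / 4 : ℝ), (1 / 4 : ℝ), (1 / 2 : ℝ))) := by
  have h : Tendsto (fun i : ℕ => ((1 / 2 : ℝ)) ^ (i + 1)) atTop (nhds 0) := by
    have := tendsto_pow_atTop_nhds_zero_of_lt_one (by norm_num : (0:ℝ) ≤ 1/2) (by norm_num)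
    exact this.comp (tendsto_add_atTop_nat 1)
  have : Tendsto (fun i : ℕ => ((1/4 + (1/2:ℝ)^(i+1)), (1/4:ℝ), (1/2 - (1/2:ℝ)^(i+1))))
      atTop (nhds (1/4 + 0 : ℝ) ×ˢ (nhds (1/4:ℝ) ×ˢ nhds (1/2 - 0 : ℝ))) :=
    (tendsto_const_nhds.add h).prodMk
      (tendsto_const_nhds.prodMk (tendsto_const_nhds.sub h))
  rw [← nhds_prod_eq, ← nhds_prod_eq] at this
  simp only [add_zero, sub_zero] at this
  convert this using 1
  funext i
  exact mu_eq i
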